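/- α-translation commutes with right μ-substitution: for λμ-terms M, N and distinct μ-variables α ≠ β, we have (M[β:=_r N])_α = (M_α)[β:=_r (N_α)], where [β:=_r N] denotes the right μ-substitution replacing every subterm [β]P by [β](P)N. -/
import Mathlib


namespace LMu

/-- λμ-terms: variables, λ-abstraction, application, bracket [α]M, μ-abstraction. -/
inductive Trm : Type
  | var : ℕ → Trm
  | lam : ℕ → Trm → Trm
  | app : Trm → Trm → Trm
  | brk : ℕ → Trm → Trm
  | mu  : ℕ → Trm → Trm
deriving DecidableEq

/-- α-translation: replace every subterm [α]N by N. -/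
def trans (a : ℕ) : Trm → Trm
  | .var x => .var x
  | .lam x M => .lam x (trans a M)
  | .app M N => .app (trans a M) (trans a N)
  | .brk b M => if b = a then trans a M else .brk b (trans a M)
  | .mu b M => .mu b (trans a M)

/-- Renaming of free occurrences of the μ-variable a by b. -/
def renMu (a b : ℕ) : Trm → Trm
  | .var x => .var x
  | .lam x M => .lam x (renMu a b M)
  | .app M N => .app (renMu a b M) (renMu a b N)
  | .brk c M => .brk (if c = a then b else c) (renMu a b M)
  | .mu c M => if c = a then .mu c M else .mu c (renMu a b M)

/-- λ-substitution M[x:=N]. -/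
def subL (x : ℕ) (N : Trm) : Trm → Trm
  | .var y => if y = x then N else .var y
  | .lam y M => if y = x then .lam y M else .lam y (subL x N M)
  | .app M₁ M₂ => .app (subL x N M₁) (subL x N M₂)
  | .brk a M => .brk a (subL x N M)
  | .mu a M => .mu a (subL x N M)

/-- Right μ-substitution M[α:=_r N]: replace each [α]P by [α](P)N. -/
def subR (a : ℕ) (N : Trm) : Trm → Trm
  | .var x => .var x
  | .lam x M => .lam x (subR a N M)
  | .app M₁ M₂ => .app (subR a N M₁) (subR a N M₂)
  | .brk b M => if b = a then .brk b (.app (subR a N M) N) else .brk b (subR a N M)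
  | .mu b M => if b = a then .mu b M else .mu b (subR a N M)

/-- Left μ-substitution M[α:=_l N]: replace each [α]P by [α](N)P. -/
def subLmu (a : ℕ) (N : Trm) : Trm → Trm
  | .var x => .var x
  | .lam x M => .lam x (subLmu a N M)
  | .app M₁ M₂ => .app (subLmu a N M₁) (subLmu a N M₂)
  | .brk b M => if b = a then .brk b (.app N (subLmu a N M)) else .brk b (subLmu a N M)
  | .mu b M => if b = a then .mu b M else .mu b (subLmu a N M)

/-- Free μ-variables. -/
def fvMu : Trm → Finset ℕ
  | .var _ => ∅
  | .lam _ M => fvMu M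
  | .app M N => fvMu M ∪ fvMu N
  | .brk a M => insert a (fvMu M)
  | .mu a M => fvMu M \ {a}

/-- Complexity of a term. -/
def cxty : Trm → ℕ
  | .var _ => 1
  | .lam _ M => cxty M + 1
  | .app M N => cxty M + cxty N + 1
  | .brk _ M => cxty M + 1
  | .mu _ M => cxty M + 1

inductive Rule | beta | mu | mu' | rho | theta | eps
deriving DecidableEq

/-- Head (root) reduction for each rule. -/
inductive Head : Rule → Trm → Trm → Prop
  | beta (x M N) : Head .beta (.app (.lam x M) N) (subL x N M)
  | mu (a M N) : Head .mu (.app (.mu a M) N) (.mu a (subR a N M))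
  | mu' (a M N) : Head .mu' (.app N (.mu a M)) (.mu a (subLmu a N M))
  | rho (a b M) : Head .rho (.brk b (.mu a M)) (renMu a b M)
  | theta (a M) : a ∉ fvMu M → Head .theta (.mu a (.brk a M)) M
  | eps (a b M) : Head .eps (.mu a (.mu b M)) (.mu a (trans b M))

/-- One-step reduction by any rule in S, anywhere in the term. -/
inductive Step (S : Set Rule) : Trm → Trm → Prop
  | head {r M N} : r ∈ S → Head r M N → Step S M N
  | lam {M N} (x) : Step S M N → Step S (.lam x M) (.lam x N)
  | appl {M M'} (N) : Step S M M' → Step S (.app M N) (.app M' N)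
  | appr {N N'} (M) : Step S N N' → Step S (.app M N) (.app M N')
  | brk {M N} (a) : Step S M N → Step S (.brk a M) (.brk a N)
  | mu {M N} (a) : Step S M N → Step S (.mu a M) (.mu a N)

def RS : Set Rule := {.beta, .mu, .rho, .theta, .eps}
def RS' : Set Rule := {.beta, .mu, .mu', .rho, .eps}
def RAll : Set Rule := {.beta, .mu, .mu', .rho, .theta, .eps}

/-- Normal form for the rule set S. -/
def NF (S : Set Rule) (M : Trm) : Prop := ∀ N, ¬ Step S M N

/-- Strong normalization: every reduction sequence terminates. -/
def SN (S : Set Rule) (M : Trm) : Prop := Acc (fun a b => Step S b a) M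

def Steps (S : Set Rule) : Trm → Trm → Prop := Relation.ReflTransGen (Step S)

/-- Weak normalization: reduces to a normal form. -/
def WN (S : Set Rule) (M : Trm) : Prop := ∃ N, Steps S M N ∧ NF S N

/-- There is a reduction sequence of length n starting from M. -/
def RedSeq (S : Set Rule) : ℕ → Trm → Prop
  | 0, _ => True
  | n + 1, M => ∃ N, Step S M N ∧ RedSeq S n N

/-- Simple types. -/
inductive Ty | atom : ℕ → Ty | bot : Ty | arr : Ty → Ty → Ty

abbrev Ctx := ℕ → Option Ty

/-- Typing judgment Γ ⊢ M : A ; Θ of the simply typed λμ-calculus. -/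
inductive Typing : Ctx → Trm → Ty → Ctx → Prop
  | ax {Γ Θ x A} : Γ x = some A → Typing Γ (.var x) A Θ
  | lam {Γ Θ x M A B} : Typing (Function.update Γ x (some A)) M B Θ →
      Typing Γ (.lam x M) (.arr A B) Θ
  | app {Γ Θ M N A B} : Typing Γ M (.arr A B) Θ → Typing Γ N A Θ →
      Typing Γ (.app M N) B Θ
  | brk {Γ Θ a M A} : Typing Γ M A Θ → Θ a = some A → Typing Γ (.brk a M) .bot Θ
  | mu {Γ Θ a M A} : Typing Γ M .bot (Function.update Θ a (some A)) →
      Typing Γ (.mu a M) A Θ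

def Typable (M : Trm) : Prop := ∃ Γ A Θ, Typing Γ M A Θ

/-- Subterm relation. -/
inductive Sub : Trm → Trm → Prop
  | refl (M) : Sub M M
  | lam {P M} (x) : Sub P M → Sub P (.lam x M)
  | appl {P M} (N) : Sub P M → Sub P (.app M N)
  | appr {P N} (M) : Sub P N → Sub P (.app M N)
  | brk {P M} (a) : Sub P M → Sub P (.brk a M)
  | mu {P M} (a) : Sub P M → Sub P (.mu a M)

/-- M is α-clean: no subterm [α]U with U a λ-abstraction. -/
def Clean (a : ℕ) (M : Trm) : Prop :=
  ∀ U, Sub (.brk a U) M → ∀ x P, U ≠ .lam x P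

end LMu

open LMu in
theorem trans_subR_comm (M N : LMu.Trm) (a b : ℕ) (hab : a ≠ b) :
    LMu.trans a (LMu.subR b N M) = LMu.subR b (LMu.trans a N) (LMu.trans a M) := by
  induction M with
  | var x => rfl
  | lam x M ih => simp [LMu.subR, LMu.trans, ih]
  | app M₁ M₂ ih₁ ih₂ => simp [LMu.subR, LMu.trans, ih₁, ih₂]
  | brk c M ih =>
    by_cases h1 : c = b <;> by_cases h2 : c = a <;>
      simp_all [LMu.subR, LMu.trans]
  | mu c M ih =>
    by_cases h1 : c = b <;> simp_all [LMu.subR, LMu.trans]
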